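/- In the meta-MDP Meta_B(M) built from an SSP MDP M, every infinite trajectory of a policy that fails to reach a goal state of Meta_B(M) projects (by forgetting the configuration component) onto an infinite trajectory in M that fails to reach the goal of M; consequently, if every improper policy of M accumulates infinite expected cost from some state, the same holds for Meta_B(M), so Meta_B(M) is itself an SSP MDP. -/
import Mathlib


open Filter

noncomputable def hitProb {σ : Type*} [Fintype σ] (P : σ → σ → ℝ) (G : σ → Prop)
    [DecidablePred G] : ℕ → σ → ℝ
  | 0, s => if G s then 1 else 0
  | n + 1, s => if G s then 1 else ∑ s' : σ, P s s' * hitProb P G n s'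

def ProperFrom {σ : Type*} [Fintype σ] (P : σ → σ → ℝ) (G : σ → Prop)
    [DecidablePred G] (s : σ) : Prop :=
  Tendsto (fun n => hitProb P G n s) atTop (nhds 1)

/-- Expected cost accumulated over `n` steps before hitting the goal, for a stationary
Markov chain `P` with per-step cost `K`. -/
noncomputable def expCost {σ : Type*} [Fintype σ] (P : σ → σ → ℝ) (K : σ → ℝ)
    (G : σ → Prop) [DecidablePred G] : ℕ → σ → ℝ
  | 0, _ => 0
  | n + 1, s => if G s then 0 else ∑ s' : σ, P s s' * (K s + expCost P K G n s')

/-- The transition kernel of the meta-MDP under a meta-policy `πm` (which either thinks,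
choosing `nop` and advancing the solver configuration via `B`, or acts with `f s χ`). -/
noncomputable def metaKernel {S A X : Type*} [DecidableEq A] [DecidableEq X]
    (T : S → A → S → ℝ) (nop : A) (B : X → X) (πm : S × X → A) :
    S × X → S × X → ℝ :=
  fun p p' =>
    if πm p = nop then (if p'.2 = B p.2 then T p.1 nop p'.1 else 0)
    else (if p'.2 = p.2 then T p.1 (πm p) p'.1 else 0)


set_option linter.unusedSectionVars false
open Filter
section Chain
variable {σ : Type*} [Fintype σ] (P : σ → σ → ℝ) (G : σ → Prop) [DecidablePred G]
  (K : σ → ℝ)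

lemma hitProb_nonneg (hP0 : ∀ s s', 0 ≤ P s s') : ∀ n s, 0 ≤ hitProb P G n s := by
  intro n
  induction n with
  | zero => intro s; simp only [hitProb]; split <;> norm_num
  | succ n ih =>
    intro s; simp only [hitProb]; split
    · norm_num
    · exact Finset.sum_nonneg fun s' _ => mul_nonneg (hP0 s s') (ih s')

lemma hitProb_le_one (hP0 : ∀ s s', 0 ≤ P s s') (hP1 : ∀ s, ∑ s', P s s' = 1) :
    ∀ n s, hitProb P G n s ≤ 1 := by
  intro n
  induction n with
  | zero => intro s; simp only [hitProb]; split <;> norm_num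
  | succ n ih =>
    intro s; simp only [hitProb]; split
    · norm_num
    · calc ∑ s' : σ, P s s' * hitProb P G n s' ≤ ∑ s' : σ, P s s' * 1 :=
            Finset.sum_le_sum fun s' _ => mul_le_mul_of_nonneg_left (ih s') (hP0 s s')
        _ = 1 := by rw [Finset.sum_congr rfl fun (x:σ) _ => mul_one (P s x), hP1 s]

lemma hitProb_le_succ (hP0 : ∀ s s', 0 ≤ P s s') :
    ∀ n s, hitProb P G n s ≤ hitProb P G (n+1) s := by
  intro n
  induction n with
  | zero =>
    intro s; simp only [hitProb]; split
    · norm_num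
    · exact Finset.sum_nonneg fun s' _ => mul_nonneg (hP0 s s')
        (hitProb_nonneg P G hP0 0 s')
  | succ n ih =>
    intro s
    show (if G s then 1 else _) ≤ (if G s then 1 else _)
    split
    · norm_num
    · exact Finset.sum_le_sum fun s' _ => mul_le_mul_of_nonneg_left (ih s') (hP0 s s')

lemma hitProb_mono (hP0 : ∀ s s', 0 ≤ P s s') (s : σ) :
    Monotone (fun n => hitProb P G n s) :=
  monotone_nat_of_le_succ fun n => hitProb_le_succ P G hP0 n s

lemma hitProb_goal (s : σ) (hG : G s) : ∀ n, hitProb P G n s = 1 := by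
  intro n; cases n <;> simp [hitProb, hG]

/-- Reachability via positive transitions. -/
def Reach (q r : σ) : Prop := Relation.ReflTransGen (fun a b => 0 < P a b) q r

lemma hitProb_eq_zero (hP0 : ∀ s s', 0 ≤ P s s') (q : σ)
    (h : ∀ r, Reach P q r → ¬ G r) : ∀ n, hitProb P G n q = 0 := by
  intro n
  induction n generalizing q with
  | zero => simp [hitProb, h q Relation.ReflTransGen.refl]
  | succ n ih =>
    simp only [hitProb, h q Relation.ReflTransGen.refl, if_false]
    refine Finset.sum_eq_zero fun r _ => ?_
    rcases (hP0 q r).lt_or_eq with hpos | hz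
    · rw [ih r fun r' hr' => h r' (Relation.ReflTransGen.trans
        (Relation.ReflTransGen.single hpos) hr'), mul_zero]
    · rw [← hz, zero_mul]

/-- A state all of whose reachable states can reach it back. -/
def IsBottom (q : σ) : Prop := ∀ r, Reach P q r → Reach P r q

lemma exists_bottom [DecidableEq σ] (q : σ) : ∃ b, Reach P q b ∧ IsBottom P b := by
  classical
  obtain ⟨n, hn⟩ : ∃ n, (Finset.univ.filter (fun r => Reach P q r)).card = n := ⟨_, rfl⟩
  induction n using Nat.strong_induction_on generalizing q with
  | _ n ih =>
    by_cases hb : IsBottom P q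
    · exact ⟨q, Relation.ReflTransGen.refl, hb⟩
    · simp only [IsBottom, not_forall] at hb
      obtain ⟨r, hqr, hrq⟩ := hb
      have hsub : (Finset.univ.filter (fun x => Reach P r x)) ⊂
          (Finset.univ.filter (fun x => Reach P q x)) := by
        refine Finset.ssubset_iff_of_subset ?_ |>.2 ⟨q, ?_, ?_⟩
        · intro x hx
          simp only [Finset.mem_filter, Finset.mem_univ, true_and] at *
          exact hqr.trans hx
        · simp only [Finset.mem_filter, Finset.mem_univ, true_and]
          exact Relation.ReflTransGen.refl
        · simp [hrq]
      obtain ⟨b, hrb, hbb⟩ := ih _ (hn ▸ Finset.card_lt_card hsub) r rfl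
      exact ⟨b, hqr.trans hrb, hbb⟩

end Chain

section Chain2
variable {σ : Type*} [Fintype σ] [DecidableEq σ] (P : σ → σ → ℝ) (G : σ → Prop)
  [DecidablePred G] (K : σ → ℝ)

variable (Ab : σ → Prop) [DecidablePred Ab]

noncomputable def surv : ℕ → σ → σ → ℝ
  | 0, q, q' => if q = q' then 1 else 0
  | t+1, q, q' => if Ab q then 0 else ∑ r : σ, P q r * surv t r q'

lemma surv_nonneg (hP0 : ∀ s s', 0 ≤ P s s') : ∀ t q q', 0 ≤ surv P Ab t q q' := by
  intro t
  induction t with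
  | zero => intro q q'; simp only [surv]; split <;> norm_num
  | succ t ih =>
    intro q q'; simp only [surv]; split
    · norm_num
    · exact Finset.sum_nonneg fun r _ => mul_nonneg (hP0 q r) (ih r q')

lemma surv_sum_le_one (hP0 : ∀ s s', 0 ≤ P s s') (hP1 : ∀ s, ∑ s', P s s' = 1) :
    ∀ t q, ∑ q' : σ, surv P Ab t q q' ≤ 1 := by
  intro t
  induction t with
  | zero => intro q; simp [surv]
  | succ t ih =>
    intro q; simp only [surv]; split
    · simp
    · rw [Finset.sum_comm]
      calc ∑ r : σ, ∑ q' : σ, P q r * surv P Ab t r q'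
          = ∑ r : σ, P q r * ∑ q' : σ, surv P Ab t r q' := by
            simp [Finset.mul_sum]
        _ ≤ ∑ r : σ, P q r * 1 := Finset.sum_le_sum fun r _ =>
            mul_le_mul_of_nonneg_left (ih r) (hP0 q r)
        _ = 1 := by rw [Finset.sum_congr rfl fun (x:σ) _ => mul_one (P q x), hP1 q]

lemma surv_succ_of_not (q : σ) (hq : ¬ Ab q) (t : ℕ) (q' : σ) :
    surv P Ab (t+1) q q' = ∑ r : σ, P q r * surv P Ab t r q' := by
  simp [surv, hq]

lemma surv_succ_of_mem (q : σ) (hq : Ab q) (t : ℕ) (q' : σ) :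
    surv P Ab (t+1) q q' = 0 := by
  simp [surv, hq]

lemma surv_zero_self (q : σ) : surv P Ab 0 q q = 1 := by simp [surv]

lemma surv_add : ∀ a b q q', surv P Ab (a+b) q q' = ∑ r : σ, surv P Ab a q r * surv P Ab b r q' := by
  intro a
  induction a with
  | zero =>
    intro b q q'
    rw [Nat.zero_add]
    rw [Finset.sum_eq_single q (fun r _ hr => by simp [surv, Ne.symm hr])
      (fun h => absurd (Finset.mem_univ q) h)]
    simp [surv]
  | succ a ih =>
    intro b q q'
    have : a + 1 + b = (a + b) + 1 := by omega
    rw [this]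
    by_cases hq : Ab q
    · rw [surv_succ_of_mem P Ab q hq]
      refine (Finset.sum_eq_zero fun r _ => ?_).symm
      rw [surv_succ_of_mem P Ab q hq, zero_mul]
    · rw [surv_succ_of_not P Ab q hq]
      have : ∀ r : σ, surv P Ab (a+1) q r * surv P Ab b r q'
          = ∑ u : σ, P q u * (surv P Ab a u r * surv P Ab b r q') := by
        intro r
        rw [surv_succ_of_not P Ab q hq, Finset.sum_mul]
        exact Finset.sum_congr rfl fun u _ => (mul_assoc _ _ _)
      rw [Finset.sum_congr rfl fun r _ => this r, Finset.sum_comm]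
      refine Finset.sum_congr rfl fun u _ => ?_
      rw [ih b u q', Finset.mul_sum]

end Chain2
section Decomp
variable {σ : Type*} [Fintype σ] [DecidableEq σ] (P : σ → σ → ℝ) (G : σ → Prop)
  [DecidablePred G] (K : σ → ℝ) (FB : Finset σ)

def Abp : σ → Prop := fun r => G r ∨ r ∈ FB

instance : DecidablePred (Abp G FB) := fun _ => inferInstanceAs (Decidable (_ ∨ _))

lemma abp_of_G {q : σ} (h : G q) : Abp G FB q := Or.inl h
lemma abp_of_FB {q : σ} (h : q ∈ FB) : Abp G FB q := Or.inr h

lemma surv_term_zero {q : σ} (hq : Abp G FB q) (t : ℕ) (q' : σ) (L : σ → ℝ) :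
    (if Abp G FB q' then 0 else surv P (Abp G FB) t q q' * L q') = 0 := by
  split
  · rfl
  · rename_i hq'
    cases t with
    | zero =>
      have : q ≠ q' := fun h => hq' (h ▸ hq)
      simp [surv, this]
    | succ t => rw [surv_succ_of_mem P (Abp G FB) q hq, zero_mul]

lemma surv_FB_zero {q : σ} (hq : q ∉ FB) (b : σ) (hb : b ∈ FB) (L : ℝ) :
    surv P (Abp G FB) 0 q b * L = 0 := by
  have : q ≠ b := fun h => hq (h ▸ hb)
  simp [surv, this]

lemma surv_FB_zero' {q : σ} (hq : Abp G FB q) (t : ℕ) (b : σ) (hb : b ∈ FB)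
    (hFBG : ∀ b ∈ FB, ¬ G b) (hqFB : q ∉ FB) (L : ℝ) :
    surv P (Abp G FB) t q b * L = 0 := by
  cases t with
  | zero => exact surv_FB_zero P G FB hqFB b hb L
  | succ t => rw [surv_succ_of_mem P (Abp G FB) q hq, zero_mul]

lemma expCost_decomp (hP1 : ∀ s, ∑ s', P s s' = 1) (hFBG : ∀ b ∈ FB, ¬ G b) :
    ∀ n q, expCost P K G n q =
    (∑ t ∈ Finset.range n, ∑ q' : σ,
        if Abp G FB q' then 0 else surv P (Abp G FB) t q q' * K q')
    + ∑ t ∈ Finset.range n, ∑ b ∈ FB, surv P (Abp G FB) t q b * expCost P K G (n - t) b := by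
  intro n
  induction n with
  | zero => intro q; simp [expCost]
  | succ n ih =>
    intro q
    by_cases hG : G q
    · have h1 : expCost P K G (n+1) q = 0 := by simp [expCost, hG]
      rw [h1]
      have hq : Abp G FB q := abp_of_G G FB hG
      have hqFB : q ∉ FB := fun h => hFBG q h hG
      rw [Finset.sum_eq_zero fun t _ => Finset.sum_eq_zero fun q' _ =>
        surv_term_zero P G FB hq t q' K]
      rw [Finset.sum_eq_zero fun t _ => Finset.sum_eq_zero fun b hb =>
        surv_FB_zero' P G FB hq t b hb hFBG hqFB _]
      norm_num
    · by_cases hFBq : q ∈ FB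
      · have hq : Abp G FB q := abp_of_FB G FB hFBq
        rw [Finset.sum_eq_zero fun t _ => Finset.sum_eq_zero fun q' _ =>
          surv_term_zero P G FB hq t q' K]
        have h2 : ∀ t ∈ Finset.range (n+1), (∑ b ∈ FB, surv P (Abp G FB) t q b
            * expCost P K G (n + 1 - t) b)
            = if t = 0 then expCost P K G (n+1) q else 0 := by
          intro t _
          cases t with
          | zero =>
            rw [if_pos rfl]
            rw [Finset.sum_eq_single q
              (fun b hb hbq => by
                have : q ≠ b := Ne.symm hbq
                simp [surv, this])
              (fun h => absurd hFBq h)]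
            rw [surv_zero_self, one_mul]
            norm_num
          | succ t =>
            simp only [Nat.succ_ne_zero, if_false]
            exact Finset.sum_eq_zero fun b _ => by
              rw [surv_succ_of_mem P (Abp G FB) q hq, zero_mul]
        rw [Finset.sum_congr rfl h2, Finset.sum_ite_eq' (Finset.range (n+1)) 0 _]
        simp
      · -- main case
        have hq : ¬ Abp G FB q := by
          intro h; rcases h with h | h
          · exact hG h
          · exact hFBq h
        have lhs : expCost P K G (n+1) q
            = K q + ∑ q' : σ, P q q' * expCost P K G n q' := by
          show (if G q then 0 else ∑ q' : σ, P q q' * (K q + expCost P K G n q'))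
            = _
          rw [if_neg hG]
          rw [Finset.sum_congr rfl fun q' _ => mul_add (P q q') (K q) _]
          rw [Finset.sum_add_distrib, ← Finset.sum_mul, hP1, one_mul]
        rw [lhs, Finset.sum_congr rfl fun q' _ => by rw [ih q']]
        -- distribute
        have expand : ∑ q' : σ, P q q' *
            ((∑ t ∈ Finset.range n, ∑ r : σ,
              if Abp G FB r then 0 else surv P (Abp G FB) t q' r * K r)
            + ∑ t ∈ Finset.range n, ∑ b ∈ FB, surv P (Abp G FB) t q' b * expCost P K G (n - t) b)
            = (∑ t ∈ Finset.range n, ∑ r : σ,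
                if Abp G FB r then 0 else surv P (Abp G FB) (t+1) q r * K r)
            + ∑ t ∈ Finset.range n, ∑ b ∈ FB,
                surv P (Abp G FB) (t+1) q b * expCost P K G (n - t) b := by
          rw [Finset.sum_congr rfl fun q' _ => mul_add (P q q') _ _, Finset.sum_add_distrib]
          congr 1
          · rw [Finset.sum_congr rfl fun q' _ => Finset.mul_sum _ _ _, Finset.sum_comm]
            refine Finset.sum_congr rfl fun t _ => ?_
            rw [Finset.sum_congr rfl fun q' _ => Finset.mul_sum _ _ _, Finset.sum_comm]
            refine Finset.sum_congr rfl fun r _ => ?_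
            by_cases hr : Abp G FB r
            · simp [hr]
            · simp only [if_neg hr]
              rw [surv_succ_of_not P (Abp G FB) q hq, Finset.sum_mul]
              exact Finset.sum_congr rfl fun q' _ => (mul_assoc _ _ _).symm
          · rw [Finset.sum_congr rfl fun q' _ => Finset.mul_sum _ _ _, Finset.sum_comm]
            refine Finset.sum_congr rfl fun t _ => ?_
            rw [Finset.sum_congr rfl fun q' _ => Finset.mul_sum _ _ _, Finset.sum_comm]
            refine Finset.sum_congr rfl fun b _ => ?_
            rw [surv_succ_of_not P (Abp G FB) q hq, Finset.sum_mul]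
            exact Finset.sum_congr rfl fun q' _ => (mul_assoc _ _ _).symm
        rw [expand]
        -- now match with RHS via sum_range_succ'
        have rhs1 : ∑ t ∈ Finset.range (n+1), ∑ r : σ,
            (if Abp G FB r then 0 else surv P (Abp G FB) t q r * K r)
            = (∑ t ∈ Finset.range n, ∑ r : σ,
              if Abp G FB r then 0 else surv P (Abp G FB) (t+1) q r * K r) + K q := by
          rw [Finset.sum_range_succ']
          congr 1
          rw [Finset.sum_eq_single q
            (fun r _ hr => by
              have hqr : q ≠ r := Ne.symm hr
              have : surv P (Abp G FB) 0 q r = 0 := by simp [surv, hqr]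
              rw [this, zero_mul, ite_self])
            (fun h => absurd (Finset.mem_univ q) h)]
          rw [if_neg hq, surv_zero_self, one_mul]
        have rhs2 : ∑ t ∈ Finset.range (n+1), ∑ b ∈ FB,
            surv P (Abp G FB) t q b * expCost P K G (n + 1 - t) b
            = ∑ t ∈ Finset.range n, ∑ b ∈ FB,
              surv P (Abp G FB) (t+1) q b * expCost P K G (n - t) b := by
          rw [Finset.sum_range_succ']
          have h0 : ∑ b ∈ FB, surv P (Abp G FB) 0 q b * expCost P K G (n + 1 - 0) b = 0 :=
            Finset.sum_eq_zero fun b hb => surv_FB_zero P G FB hFBq b hb _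
          rw [h0, add_zero]
          refine Finset.sum_congr rfl fun t _ => Finset.sum_congr rfl fun b _ => ?_
          rw [Nat.succ_sub_succ]
        rw [rhs1, rhs2]
        ring
end Decomp
section Decomp2
variable {σ : Type*} [Fintype σ] [DecidableEq σ] (P : σ → σ → ℝ) (G : σ → Prop)
  [DecidablePred G] (K : σ → ℝ) (FB : Finset σ)

lemma hit_decomp (hP1 : ∀ s, ∑ s', P s s' = 1) (hFBG : ∀ b ∈ FB, ¬ G b)
    (hFBhit : ∀ b ∈ FB, ∀ n, hitProb P G n b = 0) :
    ∀ n q, hitProb P G n q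
      + (∑ t ∈ Finset.range (n+1), ∑ b ∈ FB, surv P (Abp G FB) t q b)
      + (∑ q' : σ, if Abp G FB q' then 0 else surv P (Abp G FB) n q q') = 1 := by
  intro n
  induction n with
  | zero =>
    intro q
    by_cases hG : G q
    · have hqFB : q ∉ FB := fun h => hFBG q h hG
      have h1 : hitProb P G 0 q = 1 := by simp [hitProb, hG]
      have h2 : ∑ t ∈ Finset.range 1, ∑ b ∈ FB, surv P (Abp G FB) t q b = 0 := by
        rw [Finset.sum_range_one]
        exact Finset.sum_eq_zero fun b hb => by
          have : q ≠ b := fun h => hqFB (h ▸ hb)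
          simp [surv, this]
      have h3 : (∑ q' : σ, if Abp G FB q' then 0 else surv P (Abp G FB) 0 q q') = 0 := by
        refine Finset.sum_eq_zero fun q' _ => ?_
        split
        · rfl
        · rename_i hq'
          have : q ≠ q' := fun h => hq' (h ▸ (abp_of_G G FB hG))
          simp [surv, this]
      rw [h1, h2, h3]; norm_num
    · by_cases hFBq : q ∈ FB
      · have h1 : hitProb P G 0 q = 0 := by simp [hitProb, hG]
        have h2 : ∑ t ∈ Finset.range 1, ∑ b ∈ FB, surv P (Abp G FB) t q b = 1 := by
          rw [Finset.sum_range_one]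
          rw [Finset.sum_eq_single q
            (fun b _ hbq => by have : q ≠ b := Ne.symm hbq; simp [surv, this])
            (fun h => absurd hFBq h)]
          exact surv_zero_self P _ q
        have h3 : (∑ q' : σ, if Abp G FB q' then 0 else surv P (Abp G FB) 0 q q') = 0 := by
          refine Finset.sum_eq_zero fun q' _ => ?_
          split
          · rfl
          · rename_i hq'
            have : q ≠ q' := fun h => hq' (h ▸ (abp_of_FB G FB hFBq))
            simp [surv, this]
        rw [h1, h2, h3]; norm_num
      · have hq : ¬ Abp G FB q := fun h => h.elim hG hFBq
        have h1 : hitProb P G 0 q = 0 := by simp [hitProb, hG]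
        have h2 : ∑ t ∈ Finset.range 1, ∑ b ∈ FB, surv P (Abp G FB) t q b = 0 := by
          rw [Finset.sum_range_one]
          exact Finset.sum_eq_zero fun b hb => by
            have : q ≠ b := fun h => hFBq (h ▸ hb)
            simp [surv, this]
        have h3 : (∑ q' : σ, if Abp G FB q' then 0 else surv P (Abp G FB) 0 q q') = 1 := by
          rw [Finset.sum_eq_single q
            (fun q' _ hq' => by
              have : q ≠ q' := Ne.symm hq'
              have hz : surv P (Abp G FB) 0 q q' = 0 := by simp [surv, this]
              rw [hz, ite_self])
            (fun h => absurd (Finset.mem_univ q) h)]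
          rw [if_neg hq, surv_zero_self]
        rw [h1, h2, h3]; norm_num
  | succ n ih =>
    intro q
    by_cases hG : G q
    · have hq : Abp G FB q := abp_of_G G FB hG
      have hqFB : q ∉ FB := fun h => hFBG q h hG
      have h1 : hitProb P G (n+1) q = 1 := by simp [hitProb, hG]
      have h2 : ∑ t ∈ Finset.range (n+2), ∑ b ∈ FB, surv P (Abp G FB) t q b = 0 := by
        refine Finset.sum_eq_zero fun t _ => Finset.sum_eq_zero fun b hb => ?_
        have := surv_FB_zero' P G FB hq t b hb hFBG hqFB 1
        rwa [mul_one] at this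
      have h3 : (∑ q' : σ, if Abp G FB q' then 0 else surv P (Abp G FB) (n+1) q q') = 0 := by
        refine Finset.sum_eq_zero fun q' _ => ?_
        rw [surv_succ_of_mem P (Abp G FB) q hq, ite_self]
      rw [h1, h2, h3]; norm_num
    · by_cases hFBq : q ∈ FB
      · have hq : Abp G FB q := abp_of_FB G FB hFBq
        have h1 : hitProb P G (n+1) q = 0 := hFBhit q hFBq (n+1)
        have h2 : ∑ t ∈ Finset.range (n+2), ∑ b ∈ FB, surv P (Abp G FB) t q b = 1 := by
          rw [Finset.sum_range_succ']
          have hz : ∀ t ∈ Finset.range (n+1),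
              ∑ b ∈ FB, surv P (Abp G FB) (t+1) q b = 0 := fun t _ =>
            Finset.sum_eq_zero fun b _ => surv_succ_of_mem P (Abp G FB) q hq t b
          rw [Finset.sum_eq_zero hz, zero_add]
          rw [Finset.sum_eq_single q
            (fun b _ hbq => by have : q ≠ b := Ne.symm hbq; simp [surv, this])
            (fun h => absurd hFBq h)]
          exact surv_zero_self P _ q
        have h3 : (∑ q' : σ, if Abp G FB q' then 0 else surv P (Abp G FB) (n+1) q q') = 0 := by
          refine Finset.sum_eq_zero fun q' _ => ?_
          rw [surv_succ_of_mem P (Abp G FB) q hq, ite_self]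
        rw [h1, h2, h3]; norm_num
      · have hq : ¬ Abp G FB q := fun h => h.elim hG hFBq
        have h1 : hitProb P G (n+1) q = ∑ q' : σ, P q q' * hitProb P G n q' := by
          simp [hitProb, hG]
        have h2 : ∑ t ∈ Finset.range (n+2), ∑ b ∈ FB, surv P (Abp G FB) t q b
            = ∑ q' : σ, P q q' * ∑ t ∈ Finset.range (n+1), ∑ b ∈ FB, surv P (Abp G FB) t q' b := by
          rw [Finset.sum_range_succ']
          have h0 : ∑ b ∈ FB, surv P (Abp G FB) 0 q b = 0 :=
            Finset.sum_eq_zero fun b hb => by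
              have : q ≠ b := fun h => hFBq (h ▸ hb)
              simp [surv, this]
          rw [h0, add_zero]
          have hstep : ∀ t ∈ Finset.range (n+1), ∑ b ∈ FB, surv P (Abp G FB) (t+1) q b
              = ∑ q' : σ, P q q' * ∑ b ∈ FB, surv P (Abp G FB) t q' b := by
            intro t _
            rw [Finset.sum_congr rfl fun b _ => surv_succ_of_not P (Abp G FB) q hq t b,
              Finset.sum_comm]
            exact Finset.sum_congr rfl fun q' _ => (Finset.mul_sum _ _ _).symm
          rw [Finset.sum_congr rfl hstep, Finset.sum_comm]
          exact Finset.sum_congr rfl fun q' _ => (Finset.mul_sum _ _ _).symm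
        have h3 : (∑ q' : σ, if Abp G FB q' then 0 else surv P (Abp G FB) (n+1) q q')
            = ∑ r : σ, P q r * ∑ q' : σ, (if Abp G FB q' then 0 else surv P (Abp G FB) n r q') := by
          have : ∀ q' : σ, (if Abp G FB q' then 0 else surv P (Abp G FB) (n+1) q q')
              = ∑ r : σ, P q r * (if Abp G FB q' then 0 else surv P (Abp G FB) n r q') := by
            intro q'
            by_cases hq' : Abp G FB q'
            · simp [hq']
            · simp only [if_neg hq']
              exact surv_succ_of_not P (Abp G FB) q hq n q'
          rw [Finset.sum_congr rfl fun q' _ => this q', Finset.sum_comm]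
          exact Finset.sum_congr rfl fun r _ => (Finset.mul_sum _ _ _).symm
        rw [h1, h2, h3, ← Finset.sum_add_distrib, ← Finset.sum_add_distrib]
        have : ∀ q' : σ, P q q' * hitProb P G n q'
            + P q q' * (∑ t ∈ Finset.range (n+1), ∑ b ∈ FB, surv P (Abp G FB) t q' b)
            + P q q' * (∑ r : σ, if Abp G FB r then 0 else surv P (Abp G FB) n q' r)
            = P q q' := by
          intro q'
          rw [← mul_add, ← mul_add, ih q', mul_one]
        rw [Finset.sum_congr rfl fun q' _ => this q', hP1]
end Decomp2

section SOut
variable {σ : Type*} [Fintype σ] [DecidableEq σ] (P : σ → σ → ℝ) (G : σ → Prop)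
  [DecidablePred G] (FB : Finset σ)

noncomputable def sOut (n : ℕ) (q : σ) : ℝ :=
  ∑ q' : σ, if Abp G FB q' then 0 else surv P (Abp G FB) n q q'

lemma sOut_nonneg (hP0 : ∀ s s', 0 ≤ P s s') (n : ℕ) (q : σ) : 0 ≤ sOut P G FB n q := by
  refine Finset.sum_nonneg fun q' _ => ?_
  split
  · exact le_refl 0
  · exact surv_nonneg P _ hP0 n q q'

lemma sOut_le_one (hP0 : ∀ s s', 0 ≤ P s s') (hP1 : ∀ s, ∑ s', P s s' = 1) (n : ℕ) (q : σ) :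
    sOut P G FB n q ≤ 1 := by
  calc sOut P G FB n q ≤ ∑ q' : σ, surv P (Abp G FB) n q q' := by
        refine Finset.sum_le_sum fun q' _ => ?_
        split
        · exact surv_nonneg P _ hP0 n q q'
        · exact le_refl _
    _ ≤ 1 := surv_sum_le_one P _ hP0 hP1 n q

lemma sOut_of_mem (q : σ) (hq : Abp G FB q) (n : ℕ) : sOut P G FB n q = 0 := by
  refine Finset.sum_eq_zero fun q' _ => ?_
  split
  · rfl
  · rename_i hq'
    cases n with
    | zero =>
      have : q ≠ q' := fun h => hq' (h ▸ hq)
      simp [surv, this]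
    | succ n => exact surv_succ_of_mem P _ q hq n q'

lemma sOut_zero_of_not (q : σ) (hq : ¬ Abp G FB q) : sOut P G FB 0 q = 1 := by
  unfold sOut
  rw [Finset.sum_eq_single q
    (fun q' _ hq' => by
      have : q ≠ q' := Ne.symm hq'
      have hz : surv P (Abp G FB) 0 q q' = 0 := by simp [surv, this]
      rw [hz, ite_self])
    (fun h => absurd (Finset.mem_univ q) h)]
  rw [if_neg hq, surv_zero_self]

lemma sOut_succ_of_not (q : σ) (hq : ¬ Abp G FB q) (n : ℕ) :
    sOut P G FB (n+1) q = ∑ r : σ, P q r * sOut P G FB n r := by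
  unfold sOut
  have : ∀ q' : σ, (if Abp G FB q' then 0 else surv P (Abp G FB) (n+1) q q')
      = ∑ r : σ, P q r * (if Abp G FB q' then 0 else surv P (Abp G FB) n r q') := by
    intro q'
    by_cases hq' : Abp G FB q'
    · simp [hq']
    · simp only [if_neg hq']
      exact surv_succ_of_not P (Abp G FB) q hq n q'
  rw [Finset.sum_congr rfl fun q' _ => this q', Finset.sum_comm]
  exact Finset.sum_congr rfl fun r _ => (Finset.mul_sum _ _ _).symm

lemma sOut_le_succ (hP0 : ∀ s s', 0 ≤ P s s') (hP1 : ∀ s, ∑ s', P s s' = 1) :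
    ∀ n q, sOut P G FB (n+1) q ≤ sOut P G FB n q := by
  intro n
  induction n with
  | zero =>
    intro q
    by_cases hq : Abp G FB q
    · rw [sOut_of_mem P G FB q hq, sOut_of_mem P G FB q hq]
    · rw [sOut_zero_of_not P G FB q hq]
      exact sOut_le_one P G FB hP0 hP1 1 q
  | succ n ih =>
    intro q
    by_cases hq : Abp G FB q
    · rw [sOut_of_mem P G FB q hq, sOut_of_mem P G FB q hq]
    · rw [sOut_succ_of_not P G FB q hq, sOut_succ_of_not P G FB q hq]
      exact Finset.sum_le_sum fun r _ => mul_le_mul_of_nonneg_left (ih r) (hP0 q r)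

lemma sOut_anti (hP0 : ∀ s s', 0 ≤ P s s') (hP1 : ∀ s, ∑ s', P s s' = 1) (q : σ) :
    Antitone (fun n => sOut P G FB n q) :=
  antitone_nat_of_succ_le fun n => sOut_le_succ P G FB hP0 hP1 n q

lemma sOut_add (a b : ℕ) (q : σ) :
    sOut P G FB (a + b) q = ∑ r : σ, surv P (Abp G FB) a q r * sOut P G FB b r := by
  unfold sOut
  have : ∀ q' : σ, (if Abp G FB q' then 0 else surv P (Abp G FB) (a+b) q q')
      = ∑ r : σ, surv P (Abp G FB) a q r *
        (if Abp G FB q' then 0 else surv P (Abp G FB) b r q') := by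
    intro q'
    by_cases hq' : Abp G FB q'
    · simp [hq']
    · simp only [if_neg hq']
      exact surv_add P (Abp G FB) a b q q'
  rw [Finset.sum_congr rfl fun q' _ => this q', Finset.sum_comm]
  exact Finset.sum_congr rfl fun r _ => (Finset.mul_sum _ _ _).symm

lemma sOut_lt_one_of_reach (hP0 : ∀ s s', 0 ≤ P s s') (hP1 : ∀ s, ∑ s', P s s' = 1)
    (q b : σ) (hreach : Reach P q b) (hb : Abp G FB b) :
    ∃ t, sOut P G FB t q < 1 := by
  induction hreach using Relation.ReflTransGen.head_induction_on with
  | refl => exact ⟨0, by rw [sOut_of_mem P G FB b hb]; norm_num⟩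
  | head hstep _ ih =>
    rename_i a r _
    by_cases ha : Abp G FB a
    · exact ⟨0, by rw [sOut_of_mem P G FB a ha]; norm_num⟩
    · obtain ⟨t, ht⟩ := ih
      refine ⟨t + 1, ?_⟩
      rw [sOut_succ_of_not P G FB a ha]
      have key : ∑ u : σ, P a u * sOut P G FB t u
          = (∑ u ∈ Finset.univ \ {r}, P a u * sOut P G FB t u) + P a r * sOut P G FB t r := by
        rw [Finset.sum_eq_sum_sdiff_singleton_add (Finset.mem_univ r)]
      rw [key]
      have h1 : ∑ u ∈ Finset.univ \ {r}, P a u * sOut P G FB t u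
          ≤ ∑ u ∈ Finset.univ \ {r}, P a u :=
        Finset.sum_le_sum fun u _ => by
          calc P a u * sOut P G FB t u ≤ P a u * 1 :=
                mul_le_mul_of_nonneg_left (sOut_le_one P G FB hP0 hP1 t u) (hP0 a u)
            _ = P a u := mul_one _
      have h2 : ∑ u ∈ Finset.univ \ {r}, P a u = 1 - P a r := by
        have := Finset.sum_eq_sum_sdiff_singleton_add (Finset.mem_univ r) (fun u => P a u)
        rw [hP1 a] at this
        linarith
      have h3 : P a r * sOut P G FB t r < P a r * 1 :=
        mul_lt_mul_of_pos_left (lt_of_lt_of_le ht (le_refl 1)) hstep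
      nlinarith [hP0 a r]

end SOut

section Geo
variable {σ : Type*} [Fintype σ] [DecidableEq σ] [Nonempty σ] (P : σ → σ → ℝ) (G : σ → Prop)
  [DecidablePred G] (FB : Finset σ)

lemma sOut_pow_bound (hP0 : ∀ s s', 0 ≤ P s s') (hP1 : ∀ s, ∑ s', P s s' = 1)
    (m : ℕ) (δ : ℝ) (hδ0 : 0 ≤ δ) (hδ : ∀ q, sOut P G FB m q ≤ δ) :
    ∀ k q, sOut P G FB (k * m) q ≤ δ ^ k := by
  intro k
  induction k with
  | zero => intro q; simpa using sOut_le_one P G FB hP0 hP1 0 q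
  | succ k ih =>
    intro q
    have heq : (k+1) * m = m + k * m := by ring
    rw [heq, sOut_add]
    have step1 : ∀ r : σ, surv P (Abp G FB) m q r * sOut P G FB (k * m) r
        ≤ (if Abp G FB r then 0 else surv P (Abp G FB) m q r) * δ ^ k := by
      intro r
      by_cases hr : Abp G FB r
      · rw [sOut_of_mem P G FB r hr, mul_zero, if_pos hr, zero_mul]
      · rw [if_neg hr]
        exact mul_le_mul_of_nonneg_left (ih r) (surv_nonneg P _ hP0 m q r)
    calc ∑ r : σ, surv P (Abp G FB) m q r * sOut P G FB (k * m) r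
        ≤ ∑ r : σ, (if Abp G FB r then 0 else surv P (Abp G FB) m q r) * δ ^ k :=
          Finset.sum_le_sum fun r _ => step1 r
      _ = sOut P G FB m q * δ ^ k := by rw [← Finset.sum_mul]; rfl
      _ ≤ δ * δ ^ k := mul_le_mul_of_nonneg_right (hδ q) (pow_nonneg hδ0 k)
      _ = δ ^ (k+1) := by ring

lemma sOut_sum_bound (hP0 : ∀ s s', 0 ≤ P s s') (hP1 : ∀ s, ∑ s', P s s' = 1)
    (m : ℕ) (hm : 1 ≤ m) (δ : ℝ) (hδ0 : 0 ≤ δ) (hδ1 : δ < 1)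
    (hδ : ∀ q, sOut P G FB m q ≤ δ) :
    ∀ n q, ∑ t ∈ Finset.range n, sOut P G FB t q ≤ (m : ℝ) * (1 - δ)⁻¹ := by
  have key : ∀ K q, ∑ t ∈ Finset.range (K * m), sOut P G FB t q
      ≤ ∑ k ∈ Finset.range K, (m : ℝ) * δ ^ k := by
    intro K q
    induction K with
    | zero => simp
    | succ K ih =>
      have hle : K * m ≤ (K+1) * m := by nlinarith
      rw [Finset.range_eq_Ico, ← Finset.sum_Ico_consecutive _ (Nat.zero_le (K * m)) hle,
        ← Finset.range_eq_Ico, Finset.sum_range_succ]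
      refine add_le_add ih ?_
      rw [Finset.sum_Ico_eq_sum_range]
      have : ∀ i ∈ Finset.range ((K+1) * m - K * m), sOut P G FB (K * m + i) q ≤ δ ^ K := by
        intro i _
        calc sOut P G FB (K * m + i) q ≤ sOut P G FB (K * m) q :=
              sOut_anti P G FB hP0 hP1 q (Nat.le_add_right _ _)
          _ ≤ δ ^ K := sOut_pow_bound P G FB hP0 hP1 m δ hδ0 hδ K q
      calc ∑ i ∈ Finset.range ((K+1) * m - K * m), sOut P G FB (K * m + i) q
          ≤ ∑ _i ∈ Finset.range ((K+1) * m - K * m), δ ^ K := Finset.sum_le_sum this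
        _ = (((K+1) * m - K * m : ℕ) : ℝ) * δ ^ K := by
            rw [Finset.sum_const, Finset.card_range, nsmul_eq_mul]
        _ = (m : ℝ) * δ ^ K := by
            congr 1
            have : (K+1) * m - K * m = m := by
              have : (K+1) * m = K * m + m := by ring
              omega
            rw [this]
  intro n q
  have h1 : ∑ t ∈ Finset.range n, sOut P G FB t q ≤ ∑ t ∈ Finset.range (n * m), sOut P G FB t q := by
    refine Finset.sum_le_sum_of_subset_of_nonneg ?_ fun t _ _ => sOut_nonneg P G FB hP0 t q
    exact Finset.range_subset_range.2 (by nlinarith)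
  have h2 : ∑ k ∈ Finset.range n, (m : ℝ) * δ ^ k = (m : ℝ) * ∑ k ∈ Finset.range n, δ ^ k := by
    rw [Finset.mul_sum]
  have h3 : ∑ k ∈ Finset.range n, δ ^ k ≤ (1 - δ)⁻¹ := by
    have hlt : 0 < 1 - δ := by linarith
    have heq : (∑ k ∈ Finset.range n, δ ^ k) * (1 - δ) = 1 - δ ^ n := by
      nlinarith [geom_sum_mul δ n]
    rw [show (1-δ)⁻¹ = 1/(1-δ) from (one_div _).symm, le_div_iff₀ hlt]
    nlinarith [pow_nonneg hδ0 n]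
  calc ∑ t ∈ Finset.range n, sOut P G FB t q
      ≤ ∑ t ∈ Finset.range (n * m), sOut P G FB t q := h1
    _ ≤ ∑ k ∈ Finset.range n, (m : ℝ) * δ ^ k := key n q
    _ = (m : ℝ) * ∑ k ∈ Finset.range n, δ ^ k := h2
    _ ≤ (m : ℝ) * (1 - δ)⁻¹ := mul_le_mul_of_nonneg_left h3 (Nat.cast_nonneg m)

end Geo

section Helpers

lemma exists_lb (f : ℕ → ℝ) (h : Filter.Tendsto f Filter.atTop Filter.atTop) :
    ∃ D, 0 ≤ D ∧ ∀ n, -D ≤ f n := by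
  obtain ⟨N, hN⟩ := Filter.eventually_atTop.1 (Filter.tendsto_atTop.1 h 0)
  set c := (Finset.range (N+1)).inf' Finset.nonempty_range_add_one f with hc
  refine ⟨max (-c) 0, le_max_right _ _, fun n => ?_⟩
  rcases le_or_gt n N with hn | hn
  · have h1 : c ≤ f n := Finset.inf'_le f (Finset.mem_range.2 (by omega))
    have h2 : -c ≤ max (-c) 0 := le_max_left _ _
    linarith
  · have h1 := hN n (by omega)
    have h2 : (0:ℝ) ≤ max (-c) 0 := le_max_right _ _
    linarith

lemma finset_lb {β : Type*} (s : Finset β) (f : β → ℕ → ℝ)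
    (h : ∀ b ∈ s, ∃ D, 0 ≤ D ∧ ∀ n, -D ≤ f b n) :
    ∃ D, 0 ≤ D ∧ ∀ b ∈ s, ∀ n, -D ≤ f b n := by
  classical
  induction s using Finset.induction_on with
  | empty => exact ⟨0, le_refl 0, fun b hb => absurd hb (Finset.notMem_empty b)⟩
  | @insert a s ha ih =>
    obtain ⟨D1, hD10, hD1⟩ := h a (Finset.mem_insert_self a s)
    obtain ⟨D2, hD20, hD2⟩ := ih (fun b hb => h b (Finset.mem_insert_of_mem hb))
    refine ⟨max D1 D2, le_trans hD10 (le_max_left _ _), fun b hb n => ?_⟩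
    rcases Finset.mem_insert.1 hb with rfl | hb'
    · have := hD1 n
      have h2 : D1 ≤ max D1 D2 := le_max_left _ _
      linarith
    · have := hD2 b hb' n
      have h2 : D2 ≤ max D1 D2 := le_max_right _ _
      linarith

end Helpers

section Diverge
open Filter
variable {σ : Type*} [Fintype σ] [DecidableEq σ] [Nonempty σ]

theorem diverge_of_improper (P : σ → σ → ℝ) (G : σ → Prop) [DecidablePred G] (K : σ → ℝ)
    (FB : Finset σ)
    (hP0 : ∀ s s', 0 ≤ P s s') (hP1 : ∀ s, ∑ s', P s s' = 1)
    (hFBhit : ∀ b ∈ FB, ∀ n, hitProb P G n b = 0)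
    (hFBdiv : ∀ b ∈ FB, Tendsto (fun n => expCost P K G n b) atTop atTop)
    (hReach : ∀ r : σ, ∃ b, Reach P r b ∧ Abp G FB b)
    (q : σ)
    (himp : ¬ Tendsto (fun n => hitProb P G n q) atTop (nhds 1)) :
    Tendsto (fun n => expCost P K G n q) atTop atTop := by
  classical
  have hFBG : ∀ b ∈ FB, ¬ G b := by
    intro b hb hGb
    have := hFBhit b hb 0
    simp [hitProb, hGb] at this
  -- uniform escape time m and rate δ
  have hex : ∀ r : σ, ∃ t, sOut P G FB t r < 1 := fun r => by
    obtain ⟨b, hrb, hb⟩ := hReach r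
    exact sOut_lt_one_of_reach P G FB hP0 hP1 r b hrb hb
  choose tq htq using hex
  set m := (Finset.univ.sup tq) + 1 with hmdef
  have hm1 : 1 ≤ m := Nat.succ_le_succ (Nat.zero_le _)
  have hmlt : ∀ r, sOut P G FB m r < 1 := fun r => by
    have hle : tq r ≤ m := le_trans (Finset.le_sup (Finset.mem_univ r)) (Nat.le_succ _)
    exact lt_of_le_of_lt (sOut_anti P G FB hP0 hP1 r hle) (htq r)
  set δ := Finset.univ.sup' Finset.univ_nonempty (fun r => sOut P G FB m r) with hδdef
  have hδlt : δ < 1 := (Finset.sup'_lt_iff _).2 fun r _ => hmlt r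
  have hδb : ∀ r, sOut P G FB m r ≤ δ := fun r =>
    Finset.le_sup' (fun r => sOut P G FB m r) (Finset.mem_univ r)
  have hδ0 : 0 ≤ δ :=
    le_trans (sOut_nonneg P G FB hP0 m (Classical.arbitrary σ)) (hδb _)
  -- the limit L of the hitting probability
  have hmono : Monotone (fun n => hitProb P G n q) := hitProb_mono P G hP0 q
  have hbdd : BddAbove (Set.range (fun n => hitProb P G n q)) := by
    refine ⟨1, ?_⟩
    rintro x ⟨n, rfl⟩
    exact hitProb_le_one P G hP0 hP1 n q
  have htendL : Tendsto (fun n => hitProb P G n q) atTop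
      (nhds (⨆ n, hitProb P G n q)) := tendsto_atTop_ciSup hmono hbdd
  set L := ⨆ n, hitProb P G n q with hLdef
  have hL1 : L ≤ 1 := ciSup_le fun n => hitProb_le_one P G hP0 hP1 n q
  have hLlt : L < 1 := lt_of_le_of_ne hL1 (fun h => himp (h ▸ htendL))
  -- sOut tends to 0
  have hsOut0 : Tendsto (fun n => sOut P G FB n q) atTop (nhds 0) := by
    rw [Metric.tendsto_atTop]
    intro ε hε
    obtain ⟨k, hk⟩ : ∃ k, δ ^ k < ε := exists_pow_lt_of_lt_one hε hδlt
    refine ⟨k * m, fun n hn => ?_⟩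
    rw [Real.dist_eq, sub_zero, abs_of_nonneg (sOut_nonneg P G FB hP0 n q)]
    exact lt_of_le_of_lt (le_trans (sOut_anti P G FB hP0 hP1 q hn)
      (sOut_pow_bound P G FB hP0 hP1 m δ hδ0 hδb k q)) hk
  -- total FB-entry weight
  set w := fun n => ∑ t ∈ Finset.range (n+1), ∑ b ∈ FB, surv P (Abp G FB) t q b with hwdef
  have hw_eq : ∀ n, w n = 1 - hitProb P G n q - sOut P G FB n q := by
    intro n
    have := hit_decomp P G FB hP1 hFBG hFBhit n q
    simp only [hwdef, sOut]
    linarith [this]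
  have hwt : Tendsto w atTop (nhds (1 - L - 0)) := by
    refine Tendsto.congr (fun n => (hw_eq n).symm) ?_
    exact Tendsto.sub (Tendsto.sub tendsto_const_nhds htendL) hsOut0
  have hwhalf : ∀ᶠ n in atTop, (1-L)/2 ≤ w n :=
    hwt.eventually (eventually_ge_nhds (by linarith : (1-L)/2 < 1 - L - 0))
  obtain ⟨t0, ht0⟩ := hwhalf.exists
  -- cost bound constants
  set Km := Finset.univ.sup' Finset.univ_nonempty (fun r => |K r|) with hKmdef
  have hKm : ∀ r, |K r| ≤ Km := fun r => Finset.le_sup' (fun r => |K r|) (Finset.mem_univ r)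
  have hKm0 : 0 ≤ Km := le_trans (abs_nonneg _) (hKm (Classical.arbitrary σ))
  set Soc := (m:ℝ) * (1-δ)⁻¹ with hSocdef
  have hSoc : ∀ n, ∑ t ∈ Finset.range n, sOut P G FB t q ≤ Soc := fun n =>
    sOut_sum_bound P G FB hP0 hP1 m hm1 δ hδ0 hδlt hδb n q
  have hSoc0 : 0 ≤ Soc := by
    have : 0 < 1 - δ := by linarith
    positivity
  -- lower bound on the running-cost part
  have hT1 : ∀ n, -(Km * Soc) ≤ ∑ t ∈ Finset.range n, ∑ q' : σ,
      (if Abp G FB q' then 0 else surv P (Abp G FB) t q q' * K q') := by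
    intro n
    have hterm : ∀ t, -(sOut P G FB t q * Km) ≤ ∑ q' : σ,
        (if Abp G FB q' then 0 else surv P (Abp G FB) t q q' * K q') := by
      intro t
      have h1 : ∀ q' : σ, -((if Abp G FB q' then 0 else surv P (Abp G FB) t q q') * Km)
          ≤ (if Abp G FB q' then 0 else surv P (Abp G FB) t q q' * K q') := by
        intro q'
        by_cases hq' : Abp G FB q'
        · simp [hq']
        · simp only [if_neg hq']
          have hs0 : 0 ≤ surv P (Abp G FB) t q q' := surv_nonneg P _ hP0 t q q'
          have habs : |surv P (Abp G FB) t q q' * K q'| ≤ surv P (Abp G FB) t q q' * Km := by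
            rw [abs_mul, abs_of_nonneg hs0]
            exact mul_le_mul_of_nonneg_left (hKm q') hs0
          have := neg_abs_le (surv P (Abp G FB) t q q' * K q')
          linarith
      calc -(sOut P G FB t q * Km)
          = ∑ q' : σ, -((if Abp G FB q' then 0 else surv P (Abp G FB) t q q') * Km) := by
            rw [Finset.sum_neg_distrib, ← Finset.sum_mul]
            rfl
        _ ≤ _ := Finset.sum_le_sum fun q' _ => h1 q'
    calc -(Km * Soc) ≤ -(Km * ∑ t ∈ Finset.range n, sOut P G FB t q) := by
          have := hSoc n
          nlinarith
      _ = ∑ t ∈ Finset.range n, -(sOut P G FB t q * Km) := by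
          rw [Finset.sum_neg_distrib, ← Finset.sum_mul, mul_comm]
      _ ≤ _ := Finset.sum_le_sum fun t _ => hterm t
  -- uniform lower bound on FB costs
  obtain ⟨D2, hD20, hD2⟩ : ∃ D, 0 ≤ D ∧ ∀ b ∈ FB, ∀ n, -D ≤ expCost P K G n b :=
    finset_lb FB _ (fun b hb => exists_lb _ (hFBdiv b hb))
  -- conclusion
  rw [tendsto_atTop]
  intro M
  set M2 := max ((M + Km*Soc + D2) / ((1-L)/2)) 0 with hM2def
  have hM20 : (0:ℝ) ≤ M2 := le_max_right _ _
  have hhalf : (0:ℝ) < (1-L)/2 := by linarith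
  have hM2 : M + Km*Soc + D2 ≤ (1-L)/2 * M2 := by
    rcases le_or_gt (M + Km*Soc + D2) 0 with h | h
    · have : (0:ℝ) ≤ (1-L)/2 * M2 := by positivity
      linarith
    · have h1 : (M + Km*Soc + D2) / ((1-L)/2) ≤ M2 := le_max_left _ _
      rw [div_le_iff₀ hhalf] at h1
      linarith
  have hev : ∀ᶠ k in atTop, ∀ b ∈ FB, M2 ≤ expCost P K G k b :=
    (Filter.eventually_all_finset FB).2 fun b hb => (tendsto_atTop.1 (hFBdiv b hb)) M2
  obtain ⟨K1, hK1⟩ := eventually_atTop.1 hev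
  refine eventually_atTop.2 ⟨t0 + K1 + 1, fun n hn => ?_⟩
  rw [expCost_decomp P G K FB hP1 hFBG n q]
  -- bound the second (FB-continuation) sum
  have hT2 : (1-L)/2 * M2 - D2 ≤ ∑ t ∈ Finset.range n, ∑ b ∈ FB,
      surv P (Abp G FB) t q b * expCost P K G (n - t) b := by
    have hsplit : ∑ t ∈ Finset.range n, ∑ b ∈ FB,
        surv P (Abp G FB) t q b * expCost P K G (n - t) b
        = (∑ t ∈ Finset.range (t0+1), ∑ b ∈ FB,
            surv P (Abp G FB) t q b * expCost P K G (n - t) b)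
        + ∑ t ∈ Finset.Ico (t0+1) n, ∑ b ∈ FB,
            surv P (Abp G FB) t q b * expCost P K G (n - t) b := by
      rw [Finset.range_eq_Ico, ← Finset.sum_Ico_consecutive _ (Nat.zero_le (t0+1)) (by omega),
        ← Finset.range_eq_Ico]
    rw [hsplit]
    have hchunk1 : (1-L)/2 * M2 ≤ ∑ t ∈ Finset.range (t0+1), ∑ b ∈ FB,
        surv P (Abp G FB) t q b * expCost P K G (n - t) b := by
      have hterm : ∀ t ∈ Finset.range (t0+1), ∀ b ∈ FB,
          surv P (Abp G FB) t q b * M2 ≤ surv P (Abp G FB) t q b * expCost P K G (n - t) b := by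
        intro t ht b hb
        have hnt : K1 ≤ n - t := by
          have := Finset.mem_range.1 ht
          omega
        exact mul_le_mul_of_nonneg_left (hK1 (n-t) hnt b hb) (surv_nonneg P _ hP0 t q b)
      calc (1-L)/2 * M2 ≤ w t0 * M2 := mul_le_mul_of_nonneg_right ht0 hM20
        _ = ∑ t ∈ Finset.range (t0+1), ∑ b ∈ FB, surv P (Abp G FB) t q b * M2 := by
            rw [hwdef]
            rw [Finset.sum_mul]
            exact Finset.sum_congr rfl fun t _ => by rw [Finset.sum_mul]
        _ ≤ _ := Finset.sum_le_sum fun t ht => Finset.sum_le_sum fun b hb => hterm t ht b hb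
    have hchunk2 : -D2 ≤ ∑ t ∈ Finset.Ico (t0+1) n, ∑ b ∈ FB,
        surv P (Abp G FB) t q b * expCost P K G (n - t) b := by
      have hwle : ∑ t ∈ Finset.Ico (t0+1) n, ∑ b ∈ FB, surv P (Abp G FB) t q b ≤ 1 := by
        have hsub : Finset.Ico (t0+1) n ⊆ Finset.range ((n-1)+1) := by
          intro t ht
          rw [Finset.mem_range]
          have := Finset.mem_Ico.1 ht
          omega
        have h1 : ∑ t ∈ Finset.Ico (t0+1) n, ∑ b ∈ FB, surv P (Abp G FB) t q b
            ≤ ∑ t ∈ Finset.range ((n-1)+1), ∑ b ∈ FB, surv P (Abp G FB) t q b :=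
          Finset.sum_le_sum_of_subset_of_nonneg hsub fun t _ _ =>
            Finset.sum_nonneg fun b _ => surv_nonneg P _ hP0 t q b
        have h2 : w (n-1) ≤ 1 := by
          rw [hw_eq (n-1)]
          have := hitProb_nonneg P G hP0 (n-1) q
          have := sOut_nonneg P G FB hP0 (n-1) q
          linarith
        rw [hwdef] at h2
        exact le_trans h1 h2
      have hterm : ∀ t ∈ Finset.Ico (t0+1) n, ∀ b ∈ FB,
          surv P (Abp G FB) t q b * (-D2) ≤ surv P (Abp G FB) t q b * expCost P K G (n - t) b :=
        fun t _ b hb =>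
          mul_le_mul_of_nonneg_left (hD2 b hb (n-t)) (surv_nonneg P _ hP0 t q b)
      calc -D2 ≤ (∑ t ∈ Finset.Ico (t0+1) n, ∑ b ∈ FB, surv P (Abp G FB) t q b) * (-D2) := by
            nlinarith [Finset.sum_nonneg (fun t (_ : t ∈ Finset.Ico (t0+1) n) =>
              Finset.sum_nonneg fun b (_ : b ∈ FB) => surv_nonneg P (Abp G FB) hP0 t q b)]
        _ = ∑ t ∈ Finset.Ico (t0+1) n, ∑ b ∈ FB, surv P (Abp G FB) t q b * (-D2) := by
            rw [Finset.sum_mul]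
            exact Finset.sum_congr rfl fun t _ => by rw [Finset.sum_mul]
        _ ≤ _ := Finset.sum_le_sum fun t ht => Finset.sum_le_sum fun b hb => hterm t ht b hb
    linarith
  have := hT1 n
  linarith
end Diverge


section MetaLemmas

variable {S A X : Type*} [Fintype S] [Fintype X] [DecidableEq S] [DecidableEq X] [DecidableEq A]

lemma metaKernel_nonneg (T : S → A → S → ℝ) (nop : A) (B : X → X) (πm : S × X → A)
    (hT0 : ∀ s a s', 0 ≤ T s a s') (p p' : S × X) : 0 ≤ metaKernel T nop B πm p p' := by
  unfold metaKernel
  split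
  · split
    · exact hT0 _ _ _
    · exact le_refl 0
  · split
    · exact hT0 _ _ _
    · exact le_refl 0

lemma sum_collapseX (g : S → ℝ) (F : S × X → ℝ) (c : X) :
    ∑ p' : S × X, (if p'.2 = c then g p'.1 else 0) * F p' = ∑ s' : S, g s' * F (s', c) := by
  rw [Fintype.sum_prod_type]
  refine Finset.sum_congr rfl fun s' _ => ?_
  rw [Finset.sum_eq_single c (fun x _ hx => by simp [hx]) (fun h => absurd (Finset.mem_univ c) h)]
  simp

lemma metaKernel_rowsum (T : S → A → S → ℝ) (nop : A) (B : X → X) (πm : S × X → A)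
    (hT1 : ∀ s a, ∑ s', T s a s' = 1) (p : S × X) :
    ∑ p' : S × X, metaKernel T nop B πm p p' = 1 := by
  unfold metaKernel
  split
  · calc ∑ p' : S × X, (if p'.2 = B p.2 then T p.1 nop p'.1 else 0)
        = ∑ p' : S × X, (if p'.2 = B p.2 then T p.1 nop p'.1 else 0) * (fun _ => (1:ℝ)) p' := by
          simp
      _ = ∑ s' : S, T p.1 nop s' * 1 := sum_collapseX _ _ _
      _ = 1 := by simp [hT1]
  · calc ∑ p' : S × X, (if p'.2 = p.2 then T p.1 (πm p) p'.1 else 0)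
        = ∑ p' : S × X, (if p'.2 = p.2 then T p.1 (πm p) p'.1 else 0) * (fun _ => (1:ℝ)) p' := by
          simp
      _ = ∑ s' : S, T p.1 (πm p) s' * 1 := sum_collapseX _ _ _
      _ = 1 := by simp [hT1]

section Chi
variable (B : X → X) (χ0 : X) (N : ℕ)

lemma iter_fix (hstab : ∀ m, N ≤ m → B^[m] χ0 = B^[N] χ0) :
    ∀ k, B^[k] (B^[N] χ0) = B^[N] χ0 := by
  intro k
  rw [← Function.iterate_add_apply]
  exact hstab (k + N) (by omega)

lemma iter_all (hstab : ∀ m, N ≤ m → B^[m] χ0 = B^[N] χ0) (hX : ∀ χ, ∃ i, B^[i] χ0 = χ) :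
    ∀ χ, B^[N] χ = B^[N] χ0 := by
  intro χ
  obtain ⟨i, hi⟩ := hX χ
  rw [← hi, ← Function.iterate_add_apply]
  exact hstab (N + i) (by omega)

lemma samechi (hstab : ∀ m, N ≤ m → B^[m] χ0 = B^[N] χ0) (hX : ∀ χ, ∃ i, B^[i] χ0 = χ)
    (χ χ' : X) (k l : ℕ) (h1 : B^[k] χ = χ') (h2 : B^[l] χ' = χ) : χ = χ' := by
  rcases Nat.eq_zero_or_pos k with rfl | hk
  · exact (h1 : χ = χ').symm ▸ rfl
  · have hper1 : B^[l + k] χ = χ := by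
      rw [Function.iterate_add_apply, h1, h2]
    have hper : ∀ t, B^[(l + k) * t] χ = χ := by
      intro t
      induction t with
      | zero => rfl
      | succ t ih =>
        have : (l + k) * (t + 1) = (l + k) * t + (l + k) := by ring
        rw [this, Function.iterate_add_apply, hper1, ih]
    obtain ⟨i, hi⟩ := hX χ
    have hM : χ = B^[N] χ0 := by
      have h3 := hper (N + 1)
      have hge : N ≤ (l + k) * (N + 1) + i := by nlinarith
      conv_lhs at h3 => rw [← hi]
      rw [← Function.iterate_add_apply, hstab _ hge] at h3
      exact h3.symm
    have : χ' = B^[N] χ0 := by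
      rw [← h1, hM]
      exact iter_fix B χ0 N hstab k
    rw [hM, this]
end Chi

section MetaReach
variable (T : S → A → S → ℝ) (nop : A) (B : X → X) (πm : S × X → A)

lemma step_chi {p p' : S × X} (h : 0 < metaKernel T nop B πm p p') :
    p'.2 = p.2 ∨ p'.2 = B p.2 := by
  unfold metaKernel at h
  split at h
  · split at h
    · right; assumption
    · exact absurd h (lt_irrefl 0)
  · split at h
    · left; assumption
    · exact absurd h (lt_irrefl 0)

lemma reach_chi {p r : S × X} (h : Reach (metaKernel T nop B πm) p r) :
    ∃ k, r.2 = B^[k] p.2 := by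
  induction h with
  | refl => exact ⟨0, rfl⟩
  | tail hmid hstep ih =>
    obtain ⟨k, hk⟩ := ih
    rcases step_chi T nop B πm hstep with h1 | h1
    · exact ⟨k, h1.trans hk⟩
    · refine ⟨k + 1, ?_⟩
      rw [h1, hk]
      exact (Function.iterate_succ_apply' B k p.2).symm
end MetaReach

section FBdiv
variable (T : S → A → S → ℝ) (C : S → A → ℝ) (sg : S) (nop : A)
  (B : X → X) (πm : S × X → A)

lemma FB_diverge
    (hT0 : ∀ s a s', 0 ≤ T s a s') (hT1 : ∀ s a, ∑ s', T s a s' = 1)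
    (hImp : ∀ (π : S → A) (s : S),
      ¬ ProperFrom (fun s s' => T s (π s) s') (fun t => t = sg) s →
      Tendsto (fun n => expCost (fun s s' => T s (π s) s') (fun s => C s (π s))
        (fun t => t = sg) n s) atTop atTop)
    (χ0 : X) (N : ℕ) (hstab : ∀ m, N ≤ m → B^[m] χ0 = B^[N] χ0)
    (hX : ∀ χ, ∃ i, B^[i] χ0 = χ)
    (b : S × X)
    (hbot : IsBottom (metaKernel T nop B πm) b)
    (hnog : ∀ r, Reach (metaKernel T nop B πm) b r → ¬ r.1 = sg) :
    Tendsto (fun n => expCost (metaKernel T nop B πm)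
      (fun q => C q.1 (πm q)) (fun q => q.1 = sg) n b) atTop atTop := by
  set Q := metaKernel T nop B πm with hQdef
  have hchib : ∀ r, Reach Q b r → r.2 = b.2 := by
    intro r hr
    obtain ⟨k, hk⟩ := reach_chi T nop B πm hr
    obtain ⟨l, hl⟩ := reach_chi T nop B πm (hbot r hr)
    exact (samechi B χ0 N hstab hX b.2 r.2 k l hk.symm hl.symm).symm
  set π : S → A := fun s => πm (s, b.2) with hπdef
  set Rs : S → Prop := fun s => Reach Q b (s, b.2) with hRdef
  have hRb : Rs b.1 := by
    show Reach Q b (b.1, b.2)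
    exact Relation.ReflTransGen.refl
  have hRnog : ∀ s, Rs s → ¬ (s = sg) := by
    intro s hs heq
    exact hnog (s, b.2) hs heq
  have hker : ∀ s, Rs s → ∀ p' : S × X,
      Q (s, b.2) p' = if p'.2 = b.2 then T s (π s) p'.1 else 0 := by
    intro s hs p'
    by_cases hth : πm (s, b.2) = nop
    · have hBfix : B b.2 = b.2 := by
        obtain ⟨s₀, hs₀⟩ : ∃ s₀, 0 < T s nop s₀ := by
          by_contra hno
          push_neg at hno
          have : ∑ s', T s nop s' ≤ 0 :=
            Finset.sum_nonpos fun s' _ => hno s'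
          rw [hT1 s nop] at this
          linarith
        have hpos : 0 < Q (s, b.2) (s₀, B b.2) := by
          show 0 < metaKernel T nop B πm (s, b.2) (s₀, B b.2)
          unfold metaKernel
          rw [if_pos hth, if_pos rfl]
          exact hs₀
        exact hchib (s₀, B b.2) (hs.tail hpos)
      show metaKernel T nop B πm (s, b.2) p' = _
      unfold metaKernel
      rw [if_pos hth]
      show (if p'.2 = B b.2 then T s nop p'.1 else 0) = _
      rw [hBfix, ← hth]
    · show metaKernel T nop B πm (s, b.2) p' = _
      unfold metaKernel
      rw [if_neg hth]
  have hclosed : ∀ s, Rs s → ∀ s', 0 < T s (π s) s' → Rs s' := by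
    intro s hs s' hpos
    have hQpos : 0 < Q (s, b.2) (s', b.2) := by
      rw [hker s hs (s', b.2), if_pos rfl]
      exact hpos
    exact hs.tail hQpos
  set Tb : S → S → ℝ := fun s s' => T s (π s) s' with hTbdef
  have hbase0 : ∀ n s, Rs s → hitProb Tb (fun t => t = sg) n s = 0 := by
    intro n
    induction n with
    | zero =>
      intro s hs
      simp [hitProb, hRnog s hs]
    | succ n ih =>
      intro s hs
      simp only [hitProb, if_neg (hRnog s hs)]
      refine Finset.sum_eq_zero fun s' _ => ?_
      rcases (hT0 s (π s) s').lt_or_eq with hp | hz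
      · rw [show Tb s s' = T s (π s) s' from rfl, ih s' (hclosed s hs s' hp), mul_zero]
      · rw [show Tb s s' = (0:ℝ) from hz.symm, zero_mul]
  have himpb : ¬ ProperFrom Tb (fun t => t = sg) b.1 := by
    intro hten
    have h2 : Tendsto (fun _ : ℕ => (0:ℝ)) atTop (nhds 1) :=
      (Tendsto.congr (fun n => hbase0 n b.1 hRb)) hten
    exact one_ne_zero (tendsto_nhds_unique h2 tendsto_const_nhds)
  have hdiv := hImp π b.1 himpb
  have hEQ : ∀ n s, Rs s → expCost Q (fun q => C q.1 (πm q)) (fun q => q.1 = sg) n (s, b.2)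
      = expCost Tb (fun s => C s (π s)) (fun t => t = sg) n s := by
    intro n
    induction n with
    | zero => intro s _; rfl
    | succ n ih =>
      intro s hs
      have hsg : ¬ ((s, b.2).1 = sg) := hRnog s hs
      show (if (s, b.2).1 = sg then 0 else ∑ p' : S × X, Q (s, b.2) p' *
          (C (s, b.2).1 (πm (s, b.2)) + expCost Q _ _ n p'))
        = (if s = sg then 0 else ∑ s' : S, Tb s s' *
          (C s (π s) + expCost Tb _ _ n s'))
      rw [if_neg hsg, if_neg (hRnog s hs)]
      rw [Finset.sum_congr rfl fun p' _ => by rw [hker s hs p']]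
      rw [sum_collapseX (fun s' => T s (π s) s')
        (fun p' => C (s, b.2).1 (πm (s, b.2)) + expCost Q (fun q => C q.1 (πm q))
          (fun q => q.1 = sg) n p') b.2]
      refine Finset.sum_congr rfl fun s' _ => ?_
      rcases (hT0 s (π s) s').lt_or_eq with hp | hz
      · rw [ih s' (hclosed s hs s' hp)]
      · rw [show Tb s s' = (0:ℝ) from hz.symm, ← hz, zero_mul, zero_mul]
  have hfinal : ∀ n, expCost Tb (fun s => C s (π s)) (fun t => t = sg) n b.1
      = expCost Q (fun q => C q.1 (πm q)) (fun q => q.1 = sg) n b := by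
    intro n
    have := (hEQ n b.1 hRb).symm
    rwa [show ((b.1 : S), (b.2 : X)) = b from rfl] at this
  exact Tendsto.congr hfinal hdiv
end FBdiv

section PartC
variable (T : S → A → S → ℝ) (sg : S) (nop : A) (B : X → X) (f : S → X → A)
  (χ0 : X) (N : ℕ)

lemma metaKernel_top (hstab : ∀ m, N ≤ m → B^[m] χ0 = B^[N] χ0) (s : S) (p' : S × X) :
    metaKernel T nop B (fun p => if p.2 = B^[N] χ0 then f p.1 p.2 else nop) (s, B^[N] χ0) p'
    = if p'.2 = B^[N] χ0 then T s (f s (B^[N] χ0)) p'.1 else 0 := by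
  have hBfix : B (B^[N] χ0) = B^[N] χ0 := by
    have := hstab (N+1) (by omega)
    rwa [Function.iterate_succ_apply'] at this
  have hπ : (fun (p : S × X) => if p.2 = B^[N] χ0 then f p.1 p.2 else nop) (s, B^[N] χ0)
      = f s (B^[N] χ0) := if_pos rfl
  by_cases hf : f s (B^[N] χ0) = nop
  · unfold metaKernel
    rw [if_pos (by rw [hπ, hf])]
    show (if p'.2 = B (B^[N] χ0) then T s nop p'.1 else 0) = _
    rw [hBfix, ← hf]
  · unfold metaKernel
    rw [if_neg (by rw [hπ]; exact hf)]
    show (if p'.2 = B^[N] χ0 then T s ((fun (p : S × X) => if p.2 = B^[N] χ0 then f p.1 p.2 else nop) (s, B^[N] χ0)) p'.1 else 0) = _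
    rw [hπ]

lemma top_eq (hstab : ∀ m, N ≤ m → B^[m] χ0 = B^[N] χ0) :
    ∀ n s, hitProb (metaKernel T nop B (fun p => if p.2 = B^[N] χ0 then f p.1 p.2 else nop))
        (fun q => q.1 = sg) n (s, B^[N] χ0)
      = hitProb (fun s s' => T s (f s (B^[N] χ0)) s') (fun t => t = sg) n s := by
  intro n
  induction n with
  | zero =>
    intro s
    show (if s = sg then (1:ℝ) else 0) = (if s = sg then 1 else 0)
    rfl
  | succ n ih =>
    intro s
    show (if s = sg then (1:ℝ) else ∑ p' : S × X, _ * _) = (if s = sg then 1 else _)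
    by_cases hsg : s = sg
    · rw [if_pos hsg, if_pos hsg]
    · rw [if_neg hsg, if_neg hsg]
      rw [Finset.sum_congr rfl fun p' _ => by rw [metaKernel_top T nop B f χ0 N hstab s p']]
      rw [sum_collapseX (fun s' => T s (f s (B^[N] χ0)) s') _ (B^[N] χ0)]
      exact Finset.sum_congr rfl fun s' _ => by rw [ih s']

lemma climb (hT0 : ∀ s a s', 0 ≤ T s a s') (hT1 : ∀ s a, ∑ s', T s a s' = 1)
    (hstab : ∀ m, N ≤ m → B^[m] χ0 = B^[N] χ0)
    (c : ℝ) (hc : c ≤ 1) :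
    ∀ j n (χ : X) (s : S), B^[j] χ = B^[N] χ0 →
      (∀ s', c ≤ hitProb (fun s s' => T s (f s (B^[N] χ0)) s') (fun t => t = sg) n s') →
      c ≤ hitProb (metaKernel T nop B (fun p => if p.2 = B^[N] χ0 then f p.1 p.2 else nop))
        (fun q => q.1 = sg) (n + j) (s, χ) := by
  intro j
  induction j with
  | zero =>
    intro n χ s hj hbase
    have : χ = B^[N] χ0 := hj
    rw [this, top_eq T sg nop B f χ0 N hstab]
    exact hbase s
  | succ j ih =>
    intro n χ s hj hbase
    by_cases hχ : χ = B^[N] χ0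
    · rw [hχ, top_eq T sg nop B f χ0 N hstab]
      have hmono := hitProb_mono (fun s s' => T s (f s (B^[N] χ0)) s') (fun t => t = sg)
        (fun a b => hT0 a _ b) s (Nat.le_add_right n (j+1))
      exact le_trans (hbase s) hmono
    · have hπ : (fun (p : S × X) => if p.2 = B^[N] χ0 then f p.1 p.2 else nop) (s, χ) = nop :=
        if_neg hχ
      show c ≤ hitProb _ _ ((n + j) + 1) (s, χ)
      show c ≤ if (s, χ).1 = sg then 1 else ∑ p' : S × X, _
      by_cases hsg : s = sg
      · rw [if_pos hsg]; exact hc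
      · rw [if_neg hsg]
        have hker : ∀ p' : S × X,
            metaKernel T nop B (fun p => if p.2 = B^[N] χ0 then f p.1 p.2 else nop) (s, χ) p'
            = if p'.2 = B χ then T s nop p'.1 else 0 := by
          intro p'
          unfold metaKernel
          rw [if_pos hπ]
        rw [Finset.sum_congr rfl fun p' _ => by rw [hker p']]
        rw [sum_collapseX (fun s' => T s nop s') _ (B χ)]
        have hstep : ∀ s', c * T s nop s' ≤ T s nop s' *
            hitProb (metaKernel T nop B (fun p => if p.2 = B^[N] χ0 then f p.1 p.2 else nop))
              (fun q => q.1 = sg) (n + j) (s', B χ) := by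
          intro s'
          rw [mul_comm]
          refine mul_le_mul_of_nonneg_left ?_ (hT0 s nop s')
          refine ih n (B χ) s' ?_ hbase
          rw [← Function.iterate_succ_apply]
          exact hj
        calc c = c * ∑ s', T s nop s' := by rw [hT1, mul_one]
          _ = ∑ s', c * T s nop s' := by rw [Finset.mul_sum]
          _ ≤ _ := Finset.sum_le_sum fun s' _ => hstep s'
end PartC

end MetaLemmas

/-- (a) every infinite trajectory of a meta-policy in `Meta_B(M)` that never
reaches a goal state projects (by forgetting the configuration component) onto an infinite
trajectory of `M` that never reaches the goal of `M`; (b) consequently, if every improper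
policy of `M` accumulates infinite expected cost from every state from which it fails to
reach the goal, the same holds in `Meta_B(M)`; (c) so, since `B` halts on `M` with a proper
policy, `Meta_B(M)` is itself an SSP MDP (it has a complete proper policy and all improper
policies accumulate infinite cost). -/
theorem meta_mdp_is_ssp
    {S A X : Type*} [Fintype S] [Fintype X] [DecidableEq S] [DecidableEq X] [DecidableEq A]
    (T : S → A → S → ℝ) (C : S → A → ℝ) (sg : S) (nop : A)
    (hT0 : ∀ s a s', 0 ≤ T s a s') (hT1 : ∀ s a, ∑ s', T s a s' = 1)
    (hSSP : ∃ π : S → A, ∀ s, ProperFrom (fun s s' => T s (π s) s') (fun t => t = sg) s)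
    (hImp : ∀ (π : S → A) (s : S),
      ¬ ProperFrom (fun s s' => T s (π s) s') (fun t => t = sg) s →
      Tendsto (fun n => expCost (fun s s' => T s (π s) s') (fun s => C s (π s))
        (fun t => t = sg) n s) atTop atTop)
    (B : X → X) (χ0 : X) (f : S → X → A)
    (hX : ∀ χ : X, ∃ i, B^[i] χ0 = χ)
    (hB : ∃ N, (∀ m, N ≤ m → B^[m] χ0 = B^[N] χ0) ∧
      ∀ s, ProperFrom (fun s s' => T s (f s (B^[N] χ0)) s') (fun t => t = sg) s) :
    -- (a) projection of failing trajectories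
    (∀ πm : S × X → A, (∀ p, πm p = nop ∨ πm p = f p.1 p.2) →
      ∀ τ : ℕ → S × X, (∀ t, 0 < metaKernel T nop B πm (τ t) (τ (t + 1))) →
        (∀ t, (τ t).1 ≠ sg) →
        ∃ α : ℕ → A, ∀ t, 0 < T (τ t).1 (α t) (τ (t + 1)).1 ∧ (τ t).1 ≠ sg) ∧
    -- (b) every improper meta-policy accumulates infinite cost
    (∀ πm : S × X → A, (∀ p, πm p = nop ∨ πm p = f p.1 p.2) →
      ∀ p : S × X, ¬ ProperFrom (metaKernel T nop B πm) (fun q => q.1 = sg) p →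
        Tendsto (fun n => expCost (metaKernel T nop B πm)
          (fun q => C q.1 (πm q)) (fun q => q.1 = sg) n p) atTop atTop) ∧
    -- (c) the meta-MDP has a complete proper policy, hence is an SSP MDP
    (∃ πm : S × X → A, (∀ p, πm p = nop ∨ πm p = f p.1 p.2) ∧
      ∀ p : S × X, ProperFrom (metaKernel T nop B πm) (fun q => q.1 = sg) p) := by
  classical
  obtain ⟨N, hstab, hproper⟩ := hB
  refine ⟨?_, ?_, ?_⟩
  · -- (a)
    intro πm _hform τ hpos hng
    refine ⟨fun t => πm (τ t), fun t => ⟨?_, hng t⟩⟩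
    have h := hpos t
    unfold metaKernel at h
    split at h
    · rename_i hnop
      split at h
      · show 0 < T (τ t).1 (πm (τ t)) (τ (t+1)).1
        rw [hnop]; exact h
      · exact absurd h (lt_irrefl 0)
    · split at h
      · exact h
      · exact absurd h (lt_irrefl 0)
  · -- (b)
    intro πm _hform p himp
    have hNe : Nonempty (S × X) := ⟨(sg, χ0)⟩
    set Q := metaKernel T nop B πm with hQdef
    have hP0 : ∀ q q', 0 ≤ Q q q' := fun q q' => metaKernel_nonneg T nop B πm hT0 q q'
    have hP1 : ∀ q, ∑ q', Q q q' = 1 := fun q => metaKernel_rowsum T nop B πm hT1 q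
    set FB : Finset (S × X) := Finset.univ.filter
      (fun b => IsBottom Q b ∧ ∀ r, Reach Q b r → ¬ r.1 = sg) with hFBdef
    have hFBhit : ∀ b ∈ FB, ∀ n, hitProb Q (fun q => q.1 = sg) n b = 0 := by
      intro b hb n
      have hprop := (Finset.mem_filter.1 hb).2
      exact hitProb_eq_zero Q (fun q => q.1 = sg) hP0 b hprop.2 n
    have hFBdiv : ∀ b ∈ FB, Tendsto (fun n => expCost Q
        (fun q => C q.1 (πm q)) (fun q => q.1 = sg) n b) atTop atTop := by
      intro b hb
      have hprop := (Finset.mem_filter.1 hb).2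
      exact FB_diverge T C sg nop B πm hT0 hT1 hImp χ0 N hstab hX b hprop.1 hprop.2
    have hReach : ∀ r : S × X, ∃ b, Reach Q r b ∧ Abp (fun q => q.1 = sg) FB b := by
      intro r
      obtain ⟨b, hrb, hbot⟩ := exists_bottom Q r
      by_cases hg : ∃ g', Reach Q b g' ∧ g'.1 = sg
      · obtain ⟨g', h1, h2⟩ := hg
        exact ⟨g', hrb.trans h1, Or.inl h2⟩
      · push_neg at hg
        exact ⟨b, hrb, Or.inr (Finset.mem_filter.2 ⟨Finset.mem_univ b, hbot, hg⟩)⟩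
    exact diverge_of_improper Q (fun q => q.1 = sg) (fun q => C q.1 (πm q)) FB
      hP0 hP1 hFBhit hFBdiv hReach p himp
  · -- (c)
    refine ⟨fun p => if p.2 = B^[N] χ0 then f p.1 p.2 else nop, ?_, ?_⟩
    · intro p
      by_cases hp : p.2 = B^[N] χ0
      · right; exact if_pos hp
      · left; exact if_neg hp
    · rintro ⟨s, χ⟩
      set πc : S × X → A := fun p => if p.2 = B^[N] χ0 then f p.1 p.2 else nop with hπcdef
      have hP0 : ∀ q q', 0 ≤ metaKernel T nop B πc q q' :=
        fun q q' => metaKernel_nonneg T nop B πc hT0 q q'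
      have hP1 : ∀ q, ∑ q', metaKernel T nop B πc q q' = 1 :=
        fun q => metaKernel_rowsum T nop B πc hT1 q
      rw [ProperFrom, tendsto_order]
      constructor
      · intro c' hc'
        set c := (c' + 1) / 2 with hcdef
        have hc1 : c ≤ 1 := by rw [hcdef]; linarith
        have hcc : c' < c := by rw [hcdef]; linarith
        have hev : ∀ᶠ n in atTop, ∀ s' : S, c ≤ hitProb
            (fun s s' => T s (f s (B^[N] χ0)) s') (fun t => t = sg) n s' := by
          rw [eventually_all]
          intro s'
          exact (hproper s').eventually (eventually_ge_nhds (by linarith : c < 1))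
        obtain ⟨K0, hK0⟩ := eventually_atTop.1 hev
        refine eventually_atTop.2 ⟨K0 + N, fun k hk => ?_⟩
        have hkN : N ≤ k := by omega
        have hrw : k = (k - N) + N := by omega
        have hKk : K0 ≤ k - N := by omega
        have := climb T sg nop B f χ0 N hT0 hT1 hstab c hc1 N (k - N) χ s
          (iter_all B χ0 N hstab hX χ) (hK0 (k - N) hKk)
        rw [← hrw] at this
        exact lt_of_lt_of_le hcc this
      · intro c' hc'
        refine Filter.Eventually.of_forall fun n => ?_
        exact lt_of_le_of_lt (hitProb_le_one (metaKernel T nop B πc)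
          (fun q => q.1 = sg) hP0 hP1 n (s, χ)) hc'
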